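/- arXiv:2502.03601 — 2 statements merged into one kernel-verified Lean document; each statement's English description precedes it below -/
import Mathlib

section
/- Let F(x̂) = J x̂ + b be an invertible affine map on ℝ³ with det(J) > 0, and define the covariant Piola transform ψ¹(v) := Jᵀ (v ∘ F) and the contravariant Piola transform ψ²(v) := det(J) J^{-1} (v ∘ F). Then for any C¹ vector field v on the image, curl(ψ¹(v)) = ψ²(curl v), where the curl on the left is taken in the reference coordinates. -/
/-!
The curl of a field is the axial vector of the skew part of its Jacobian. By the chain rule the
Jacobian of `Jᵀ (v ∘ F)` is `Jᵀ (Dv ∘ F) J`, and on axial vectors of `3 × 3` matrices the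
congruence `G ↦ Jᵀ G J` acts as the adjugate of `J`, which is `det J • J⁻¹` for invertible `J`.
-/

open Matrix

/-- The `i`-th partial derivative of a scalar function on `ℝ³`. -/
noncomputable def pderiv3 (i : Fin 3) (f : (Fin 3 → ℝ) → ℝ) (x : Fin 3 → ℝ) : ℝ :=
  fderiv ℝ f x (Pi.single i 1)

/-- The three-dimensional curl of a vector field on `ℝ³`. -/
noncomputable def curl3 (v : (Fin 3 → ℝ) → Fin 3 → ℝ) (x : Fin 3 → ℝ) : Fin 3 → ℝ :=
  ![pderiv3 1 (fun y => v y 2) x - pderiv3 2 (fun y => v y 1) x,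
    pderiv3 2 (fun y => v y 0) x - pderiv3 0 (fun y => v y 2) x,
    pderiv3 0 (fun y => v y 1) x - pderiv3 1 (fun y => v y 0) x]

section Jacobian

variable {𝕜 : Type*} [NontriviallyNormedField 𝕜] {ι κ μ ν : Type*} [Fintype ι]

theorem hasFDerivAt_mulVec_comp_affine [CompleteSpace 𝕜] [Fintype κ] [Fintype μ] [Fintype ν]
    {v : (κ → 𝕜) → μ → 𝕜} {v' : (κ → 𝕜) →L[𝕜] μ → 𝕜} (A : Matrix ν μ 𝕜) (J : Matrix κ ι 𝕜)
    (b : κ → 𝕜) {x : ι → 𝕜} (hv : HasFDerivAt v v' (J *ᵥ x + b)) :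
    HasFDerivAt (fun y => A *ᵥ v (J *ᵥ y + b))
      ((LinearMap.toContinuousLinearMap A.mulVecLin).comp
        (v'.comp (LinearMap.toContinuousLinearMap J.mulVecLin))) x := by
  have hF : HasFDerivAt (fun y => J *ᵥ y + b) (LinearMap.toContinuousLinearMap J.mulVecLin) x :=
    (LinearMap.toContinuousLinearMap J.mulVecLin).hasFDerivAt.add_const b
  exact (LinearMap.toContinuousLinearMap A.mulVecLin).hasFDerivAt.comp x (hv.comp x hF)

variable [DecidableEq ι]

noncomputable def jacobian (v : (ι → 𝕜) → κ → 𝕜) (x : ι → 𝕜) : Matrix κ ι 𝕜 :=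
  LinearMap.toMatrix' (fderiv 𝕜 v x : (ι → 𝕜) →ₗ[𝕜] κ → 𝕜)

theorem jacobian_apply (v : (ι → 𝕜) → κ → 𝕜) (x : ι → 𝕜) (k : κ) (i : ι) :
    jacobian v x k i = fderiv 𝕜 v x (Pi.single i 1) k :=
  LinearMap.toMatrix'_apply _ _ _

theorem jacobian_mulVec_comp_affine [CompleteSpace 𝕜] [Fintype κ] [DecidableEq κ] [Fintype μ]
    [DecidableEq μ] [Fintype ν] {v : (κ → 𝕜) → μ → 𝕜} (A : Matrix ν μ 𝕜) (J : Matrix κ ι 𝕜)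
    (b : κ → 𝕜) {x : ι → 𝕜} (hv : DifferentiableAt 𝕜 v (J *ᵥ x + b)) :
    jacobian (fun y => A *ᵥ v (J *ᵥ y + b)) x = A * jacobian v (J *ᵥ x + b) * J := by
  simp only [jacobian, (hasFDerivAt_mulVec_comp_affine A J b hv.hasFDerivAt).fderiv,
    ContinuousLinearMap.toLinearMap_comp, LinearMap.coe_toContinuousLinearMap,
    LinearMap.toMatrix'_comp, ← Matrix.toLin'_apply', LinearMap.toMatrix'_toLin', Matrix.mul_assoc]

end Jacobian

/-- The vector `a` with `(G - Gᵀ) *ᵥ y = a ⨯₃ y`. -/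
def axialVec {R : Type*} [Sub R] (G : Matrix (Fin 3) (Fin 3) R) : Fin 3 → R :=
  ![G 2 1 - G 1 2, G 0 2 - G 2 0, G 1 0 - G 0 1]

theorem axialVec_transpose_mul_mul {R : Type*} [CommRing R] (J G : Matrix (Fin 3) (Fin 3) R) :
    axialVec (Jᵀ * G * J) = J.adjugate *ᵥ axialVec G := by
  ext i
  fin_cases i <;>
  · simp only [axialVec, adjugate_fin_three, Matrix.mul_apply, transpose_apply, mulVec, dotProduct,
      Fin.sum_univ_three, of_apply, Fin.isValue, Fin.zero_eta, Fin.mk_one, Fin.reduceFinMk, cons_val',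
      cons_val_zero, cons_val_one, cons_val, cons_val_fin_one]
    ring

theorem pderiv3_eq_jacobian_apply {v : (Fin 3 → ℝ) → Fin 3 → ℝ} {x : Fin 3 → ℝ}
    (hv : DifferentiableAt ℝ v x) (k i : Fin 3) :
    pderiv3 i (fun y => v y k) x = jacobian v x k i := by
  rw [pderiv3, jacobian_apply, fderiv_apply hv]
  rfl

theorem curl3_eq_axialVec_jacobian {v : (Fin 3 → ℝ) → Fin 3 → ℝ} {x : Fin 3 → ℝ}
    (hv : DifferentiableAt ℝ v x) : curl3 v x = axialVec (jacobian v x) := by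
  simp only [curl3, axialVec, pderiv3_eq_jacobian_apply hv]

/-- Commuting property of the covariant Piola transform with the curl: for the
invertible affine map `F(x̂) = J x̂ + b` with `det J > 0`, the covariant Piola
transform `ψ¹(v) := Jᵀ (v ∘ F)` and the contravariant Piola transform
`ψ²(v) := det(J) J⁻¹ (v ∘ F)` satisfy `curl(ψ¹(v)) = ψ²(curl v)` for every `C¹`
vector field `v`, the left-hand curl being taken in reference coordinates. -/
theorem curl_covariant_piola
    (J : Matrix (Fin 3) (Fin 3) ℝ) (b : Fin 3 → ℝ) (hJ : 0 < J.det)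
    (v : (Fin 3 → ℝ) → Fin 3 → ℝ) (hv : ContDiff ℝ 1 v) :
    ∀ xh : Fin 3 → ℝ,
      curl3 (fun yh => Jᵀ.mulVec (v (J.mulVec yh + b))) xh
        = J.det • J⁻¹.mulVec (curl3 v (J.mulVec xh + b)) := by
  intro xh
  have hvd : Differentiable ℝ v := hv.differentiable one_ne_zero
  have hwd : DifferentiableAt ℝ (fun yh => Jᵀ *ᵥ v (J *ᵥ yh + b)) xh :=
    (hasFDerivAt_mulVec_comp_affine Jᵀ J b (hvd _).hasFDerivAt).differentiableAt
  rw [curl3_eq_axialVec_jacobian hwd, jacobian_mulVec_comp_affine _ _ _ (hvd _),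
    axialVec_transpose_mul_mul, ← curl3_eq_axialVec_jacobian (hvd _), ← cramer_eq_adjugate_mulVec,
    ← det_smul_inv_mulVec_eq_cramer _ _ hJ.ne'.isUnit]
end

section
/- Let F(x̂) = J x̂ + b be an invertible affine map on ℝ³ with det(J) > 0, and define the contravariant Piola transform ψ²(v) := det(J) J^{-1}(v ∘ F) and ψ³(v) := det(J)(v ∘ F). Then for any C¹ vector field v, div(ψ²(v)) = ψ³(div v), where the divergence on the left is taken in reference coordinates. -/
open Matrix

/-- The three-dimensional divergence of a vector field on `ℝ³`. -/
noncomputable def div3 (v : (Fin 3 → ℝ) → Fin 3 → ℝ) (x : Fin 3 → ℝ) : ℝ :=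
  ∑ i : Fin 3, pderiv3 i (fun y => v y i) x

/-! The divergence is the trace of the Jacobian. By the chain rule the Jacobian of
`ψ²(v)` at `x̂` is `det J • J⁻¹ * Dv(F x̂) * J`, a scaled similarity transform of `Dv(F x̂)`,
so its trace is `det J * tr Dv(F x̂)`. -/

section

variable {𝕜 ι : Type*} [NontriviallyNormedField 𝕜] [Fintype ι] [DecidableEq ι]

theorem HasFDerivAt.sum_fderiv_apply_single_eq_trace {f : (ι → 𝕜) → ι → 𝕜}
    {f' : (ι → 𝕜) →L[𝕜] ι → 𝕜} {x : ι → 𝕜} (hf : HasFDerivAt f f' x) :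
    ∑ i, fderiv 𝕜 (fun y => f y i) x (Pi.single i 1)
      = (LinearMap.toMatrix' (f' : (ι → 𝕜) →ₗ[𝕜] ι → 𝕜)).trace := by
  refine Finset.sum_congr rfl fun i _ => ?_
  rw [(hasFDerivAt_pi'.1 hf i).fderiv, diag_apply, LinearMap.toMatrix'_apply]
  rfl

theorem HasFDerivAt.mulVec_comp_affine [CompleteSpace 𝕜] (A J : Matrix ι ι 𝕜) (b : ι → 𝕜)
    {v : (ι → 𝕜) → ι → 𝕜} {v' : (ι → 𝕜) →L[𝕜] ι → 𝕜} {x : ι → 𝕜}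
    (hv : HasFDerivAt v v' (J *ᵥ x + b)) :
    HasFDerivAt (fun y => A *ᵥ v (J *ᵥ y + b))
      ((toLin' A).toContinuousLinearMap ∘L v' ∘L (toLin' J).toContinuousLinearMap) x := by
  have hF : HasFDerivAt (fun y => J *ᵥ y + b) (toLin' J).toContinuousLinearMap x :=
    (toLin' J).toContinuousLinearMap.hasFDerivAt.add_const b
  exact (toLin' A).toContinuousLinearMap.hasFDerivAt.comp x (hv.comp x hF)

theorem toMatrix'_toLin'_comp_comp_toLin' [CompleteSpace 𝕜] (A J : Matrix ι ι 𝕜)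
    (v' : (ι → 𝕜) →L[𝕜] ι → 𝕜) :
    LinearMap.toMatrix' (((toLin' A).toContinuousLinearMap ∘L v' ∘L
      (toLin' J).toContinuousLinearMap : (ι → 𝕜) →L[𝕜] ι → 𝕜) : (ι → 𝕜) →ₗ[𝕜] ι → 𝕜)
      = A * LinearMap.toMatrix' (v' : (ι → 𝕜) →ₗ[𝕜] ι → 𝕜) * J := by
  simp [LinearMap.toMatrix'_comp, Matrix.mul_assoc]

end

theorem Matrix.trace_smul_inv_mul_mul_self {ι R : Type*} [Fintype ι] [DecidableEq ι]
    [CommRing R] {J : Matrix ι ι R} (hJ : IsUnit J.det) (c : R) (M : Matrix ι ι R) :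
    (c • J⁻¹ * M * J).trace = c * M.trace := by
  rw [trace_mul_comm, ← Matrix.mul_assoc, mul_smul_comm, mul_nonsing_inv _ hJ, smul_mul_assoc,
    Matrix.one_mul, trace_smul, smul_eq_mul]

/-- Commuting property of the contravariant Piola transform with the divergence:
for the invertible affine map `F(x̂) = J x̂ + b` with `det J > 0`, the
contravariant Piola transform `ψ²(v) := det(J) J⁻¹ (v ∘ F)` and the scaled
pullback `ψ³(u) := det(J) (u ∘ F)` satisfy `div(ψ²(v)) = ψ³(div v)` for every
`C¹` vector field `v`, the left-hand divergence being taken in reference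
coordinates. -/
theorem div_contravariant_piola
    (J : Matrix (Fin 3) (Fin 3) ℝ) (b : Fin 3 → ℝ) (hJ : 0 < J.det)
    (v : (Fin 3 → ℝ) → Fin 3 → ℝ) (hv : ContDiff ℝ 1 v) :
    ∀ xh : Fin 3 → ℝ,
      div3 (fun yh => J.det • J⁻¹.mulVec (v (J.mulVec yh + b))) xh
        = J.det * div3 v (J.mulVec xh + b) := by
  intro x
  have hvx := ((hv.differentiable one_ne_zero) (J *ᵥ x + b)).hasFDerivAt
  simp_rw [← smul_mulVec]
  unfold div3 pderiv3
  rw [(hvx.mulVec_comp_affine _ J b).sum_fderiv_apply_single_eq_trace,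
    hvx.sum_fderiv_apply_single_eq_trace, toMatrix'_toLin'_comp_comp_toLin',
    trace_smul_inv_mul_mul_self (isUnit_iff_ne_zero.2 hJ.ne')]
end
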